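/- Properties of the non-uniform system of sub-intrinsic cylinders: For every z_o ∈ Q_{2R}(y_o,τ_o): (i) the map ρ ↦ θ̃_{z_o;ρ} is continuous on (0,R]; (ii) for all 0 < ρ ≤ s ≤ R one has the sub-intrinsic property ⨍⨍_{Q_s^{(θ_{z_o;ρ})}(z_o)} |u|^r/s^{r/m} dx dt ≤ θ_{z_o;ρ}^{2rm/(1+m)}; and (iii) for all 0 < ρ < s ≤ R one has the growth bound θ_{z_o;ρ} ≤ (s/ρ)^{((1+m)/(mλ_r))·(N+1+(r+1)/m)} · θ_{z_o;s}; in particular θ_{z_o;ρ} ≤ (4R/ρ)^{((1+m)/(mλ_r))·(N+1+(r+1)/m)} · λ_o for every ρ ∈ (0,R]. -/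

import Mathlib

open MeasureTheory Set Filter
open scoped ENNReal Topology

noncomputable section

abbrev Esp (n : ℕ) : Type := EuclideanSpace ℝ (Fin n)
abbrev Spt (N : ℕ) : Type := Esp N × ℝ

/-- The vector power `⟦u⟧^α := |u|^(α-1) u`. -/
def vpow {k : ℕ} (α : ℝ) (u : Esp k) : Esp k := ‖u‖ ^ (α - 1) • u

/-- Frobenius norm of a k×N matrix. -/
def frob {k N : ℕ} (ξ : Fin k → Fin N → ℝ) : ℝ := Real.sqrt (∑ i, ∑ j, (ξ i j) ^ 2)

/-- Scalar product of two k×N matrices. -/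
def mdot {k N : ℕ} (A B : Fin k → Fin N → ℝ) : ℝ := ∑ i, ∑ j, A i j * B i j

/-- The space-time domain `Ω_T = Ω × (0,T]`. -/
def domPM {N : ℕ} (Ω : Set (Esp N)) (T : ℝ) : Set (Spt N) := Ω ×ˢ Set.Ioc 0 T

/-- Structure conditions (coercivity, growth, diagonal structure) for the vector field A. -/
def structCond {N k : ℕ} (m ν L : ℝ) (Ω : Set (Esp N)) (T : ℝ)
    (A : Spt N → Esp k → (Fin k → Fin N → ℝ) → (Fin k → Fin N → ℝ)) : Prop :=
  ∀ᵐ z ∂(volume.restrict (domPM Ω T)), ∀ (w : Esp k) (ξ : Fin k → Fin N → ℝ),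
    (ν * (frob ξ) ^ 2 ≤ mdot (A z w ξ) ξ) ∧
    (frob (A z w ξ) ≤ L * frob ξ) ∧
    (0 ≤ ∑ j : Fin N, (∑ i : Fin k, A z w ξ i j * vpow m w i) *
        (∑ i : Fin k, ξ i j * vpow m w i))

/-- Local L^p integrability of a scalar function on a set. -/
def locLp {N : ℕ} (p : ℝ) (f : Spt N → ℝ) (S : Set (Spt N)) : Prop :=
  ∀ K : Set (Spt N), K ⊆ S → IsCompact K → MemLp f (ENNReal.ofReal p) (volume.restrict K)

/-- Local boundedness on a set. -/
def locBounded {N k : ℕ} (u : Spt N → Esp k) (S : Set (Spt N)) : Prop :=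
  ∀ K : Set (Spt N), K ⊆ S → IsCompact K → ∃ M : ℝ, ∀ᵐ z ∂(volume.restrict K), ‖u z‖ ≤ M

/-- Weak solution of the porous medium system `∂ₜu − div A(x,t,u,D⟦u⟧^m) = div F`
with gradient data `G = D⟦u⟧^m`. -/
structure IsWeakSolution {N k : ℕ} (m : ℝ) (Ω : Set (Esp N)) (T : ℝ)
    (A : Spt N → Esp k → (Fin k → Fin N → ℝ) → (Fin k → Fin N → ℝ))
    (F : Spt N → Fin k → Fin N → ℝ)
    (u : Spt N → Esp k) (G : Spt N → Fin k → Fin N → ℝ) : Prop where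
  memLp_time : ∀ t ∈ Set.Ioo (0:ℝ) T,
    MemLp (fun x => u (x, t)) (ENNReal.ofReal (1 + m)) (volume.restrict Ω)
  cont_time : ∀ t₀ ∈ Set.Ioo (0:ℝ) T,
    Filter.Tendsto
      (fun t => eLpNorm (fun x => u (x, t) - u (x, t₀)) (ENNReal.ofReal (1 + m))
        (volume.restrict Ω))
      (nhdsWithin t₀ (Set.Ioo 0 T)) (nhds 0)
  um_memLp : MemLp (fun z => vpow m (u z)) 2 (volume.restrict (domPM Ω T))
  grad_memLp : MemLp (fun z => frob (G z)) 2 (volume.restrict (domPM Ω T))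
  is_weak_gradient : ∀ φ : Esp N → ℝ, ContDiff ℝ (⊤ : ℕ∞) φ → HasCompactSupport φ →
    tsupport φ ⊆ Ω →
    ∀ᵐ t ∂(volume.restrict (Set.Ioo (0:ℝ) T)), ∀ (i : Fin k) (j : Fin N),
      ∫ x in Ω, vpow m (u (x, t)) i * fderiv ℝ φ x (EuclideanSpace.single j (1:ℝ)) =
        - ∫ x in Ω, G (x, t) i j * φ x
  weak_form : ∀ φ : Spt N → Esp k, ContDiff ℝ (⊤ : ℕ∞) φ → HasCompactSupport φ →
    tsupport φ ⊆ Ω ×ˢ Set.Ioo 0 T →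
    ∫ z in domPM Ω T,
        (∑ i : Fin k, u z i * fderiv ℝ φ z ((0 : Esp N), (1:ℝ)) i
          - ∑ i : Fin k, ∑ j : Fin N,
              A z (u z) (G z) i j *
                fderiv ℝ φ z ((EuclideanSpace.single j (1:ℝ) : Esp N), (0:ℝ)) i) =
      ∫ z in domPM Ω T, ∑ i : Fin k, ∑ j : Fin N,
        F z i j * fderiv ℝ φ z ((EuclideanSpace.single j (1:ℝ) : Esp N), (0:ℝ)) i

/-- Scaled ball `B_ρ^{(θ)}(x₀)`. -/
def ballP {N : ℕ} (m : ℝ) (x₀ : Esp N) (θ ρ : ℝ) : Set (Esp N) :=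
  Metric.ball x₀ (θ ^ (m * (m - 1) / (1 + m)) * ρ)

/-- Time interval `Λ_ρ(t₀)`. -/
def lamI (m t₀ ρ : ℝ) : Set ℝ :=
  Set.Ioo (t₀ - ρ ^ ((1 + m) / m)) (t₀ + ρ ^ ((1 + m) / m))

/-- Scaled cylinder `Q_ρ^{(θ)}(z₀)`. -/
def cylP {N : ℕ} (m : ℝ) (z₀ : Spt N) (θ ρ : ℝ) : Set (Spt N) :=
  ballP m z₀.1 θ ρ ×ˢ lamI m z₀.2 ρ

/-- The cylinder `Q_ρ(z₀) = Q_ρ^{(1)}(z₀)`. -/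
def cylQ {N : ℕ} (m : ℝ) (z₀ : Spt N) (ρ : ℝ) : Set (Spt N) := cylP m z₀ 1 ρ

/-- Standard parabolic cylinder `C_R(z₀)`. -/
def cylC {N : ℕ} (z₀ : Spt N) (R : ℝ) : Set (Spt N) :=
  Metric.ball z₀.1 R ×ˢ Set.Ioo (z₀.2 - R ^ 2) (z₀.2 + R ^ 2)

/-- One-sided cylinder `Q_{R,S}(z₀) = B_R(x₀) × (t₀−S, t₀]`. -/
def cylRS {N : ℕ} (z₀ : Spt N) (R S : ℝ) : Set (Spt N) :=
  Metric.ball z₀.1 R ×ˢ Set.Ioc (z₀.2 - S) z₀.2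

/-- The scaling parameter `θ̃_{z;ρ}` of the non-uniform system of cylinders. -/
def thetaTildeP {N k : ℕ} (m r lo : ℝ) (u : Spt N → Esp k) (z : Spt N) (ρ : ℝ) : ℝ :=
  sInf {θ : ℝ | lo ≤ θ ∧
    (∫ w in cylP m z θ ρ, ‖u w‖ ^ r / ρ ^ (r / m)) / (volume (cylQ m z ρ)).toReal ≤
      θ ^ (m * ((N : ℝ) * (m - 1) + 2 * r) / (1 + m))}

/-- The monotonized scaling parameter `θ_{z;ρ} = max_{s ∈ [ρ,R]} θ̃_{z;s}`. -/
def thetaSys {N k : ℕ} (m r lo R : ℝ) (u : Spt N → Esp k) (z : Spt N) (ρ : ℝ) : ℝ :=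
  sSup ((fun s => thetaTildeP m r lo u z s) '' Set.Icc ρ R)

lemma one_div_succ_anti {i j : ℕ} (h : i ≤ j) : (1:ℝ)/(j+1) ≤ 1/(i+1) := by
  have : (i:ℝ) + 1 ≤ (j:ℝ) + 1 := by exact_mod_cast Nat.succ_le_succ h
  exact one_div_le_one_div_of_le (by positivity) this

lemma measCont {N : ℕ} [Nontrivial (Esp N)] (ν : Measure (Spt N)) [IsFiniteMeasure ν]
    (hac : ν ≪ (volume : Measure (Spt N))) (x₀ : Esp N) (t₀ a₀ b₀ : ℝ)
    (ha : 0 < a₀) (hb : 0 < b₀) :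
    ContinuousAt (fun ab : ℝ × ℝ =>
      (ν (Metric.ball x₀ ab.1 ×ˢ Set.Ioo (t₀ - ab.2) (t₀ + ab.2))).toReal) (a₀, b₀) := by
  have hvol_prod : ∀ (s : Set (Esp N)) (t : Set ℝ),
      (volume : Measure (Spt N)) (s ×ˢ t) = volume s * volume t := by
    intro s t; rw [Measure.volume_eq_prod]; exact Measure.prod_prod s t
  set G : ℝ × ℝ → ℝ≥0∞ :=
    fun ab => ν (Metric.ball x₀ ab.1 ×ˢ Set.Ioo (t₀ - ab.2) (t₀ + ab.2)) with hGdef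
  have hfin : ∀ s : Set (Spt N), ν s ≠ ∞ := fun s => measure_ne_top ν s
  have hmono : ∀ a b a' b' : ℝ, a ≤ a' → b ≤ b' → G (a, b) ≤ G (a', b') := by
    intro a b a' b' h1 h2
    exact measure_mono (Set.prod_mono (Metric.ball_subset_ball h1)
      (Set.Ioo_subset_Ioo (by linarith) (by linarith)))
  have hin : Tendsto (fun n : ℕ => G (a₀ - 1/(n+1), b₀ - 1/(n+1))) atTop (𝓝 (G (a₀, b₀))) := by
    have hmonoS : Monotone (fun n : ℕ => Metric.ball x₀ (a₀ - 1/(n+1)) ×ˢ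
        Set.Ioo (t₀ - (b₀ - 1/(n+1))) (t₀ + (b₀ - 1/(n+1)))) := by
      intro i j hij
      have h1 : (1:ℝ)/(j+1) ≤ 1/(i+1) := one_div_succ_anti hij
      exact Set.prod_mono (Metric.ball_subset_ball (by linarith))
        (Set.Ioo_subset_Ioo (by linarith) (by linarith))
    have hU : (⋃ n : ℕ, Metric.ball x₀ (a₀ - 1/(n+1)) ×ˢ
        Set.Ioo (t₀ - (b₀ - 1/(n+1))) (t₀ + (b₀ - 1/(n+1))))
        = Metric.ball x₀ a₀ ×ˢ Set.Ioo (t₀ - b₀) (t₀ + b₀) := by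
      apply Set.Subset.antisymm
      · refine Set.iUnion_subset fun n => Set.prod_mono (Metric.ball_subset_ball ?_)
          (Set.Ioo_subset_Ioo ?_ ?_) <;>
        · have : (0:ℝ) < 1/(n+1) := by positivity
          linarith
      · rintro ⟨x, t⟩ hz
        simp only [Set.mem_prod, Metric.mem_ball, Set.mem_Ioo] at hz
        obtain ⟨n, hn⟩ := exists_nat_one_div_lt
          (show (0:ℝ) < min (a₀ - dist x x₀) (min (t - (t₀ - b₀)) (t₀ + b₀ - t)) by
            simp only [lt_min_iff]
            exact ⟨by linarith [hz.1], by linarith [hz.2.1], by linarith [hz.2.2]⟩)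
        have hn1 : 1/((n:ℝ)+1) < a₀ - dist x x₀ := lt_of_lt_of_le hn (min_le_left _ _)
        have hn2 : 1/((n:ℝ)+1) < t - (t₀ - b₀) :=
          lt_of_lt_of_le hn (le_trans (min_le_right _ _) (min_le_left _ _))
        have hn3 : 1/((n:ℝ)+1) < t₀ + b₀ - t :=
          lt_of_lt_of_le hn (le_trans (min_le_right _ _) (min_le_right _ _))
        refine Set.mem_iUnion.2 ⟨n, ?_⟩
        simp only [Set.mem_prod, Metric.mem_ball, Set.mem_Ioo]
        exact ⟨by linarith, by linarith, by linarith⟩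
    have h := tendsto_measure_iUnion_atTop (μ := ν) hmonoS
    rw [hU] at h
    exact h
  have hout : Tendsto (fun n : ℕ => G (a₀ + 1/(n+1), b₀ + 1/(n+1))) atTop (𝓝 (G (a₀, b₀))) := by
    have hantiS : Antitone (fun n : ℕ => Metric.ball x₀ (a₀ + 1/(n+1)) ×ˢ
        Set.Ioo (t₀ - (b₀ + 1/(n+1))) (t₀ + (b₀ + 1/(n+1)))) := by
      intro i j hij
      have h1 : (1:ℝ)/(j+1) ≤ 1/(i+1) := one_div_succ_anti hij
      exact Set.prod_mono (Metric.ball_subset_ball (by linarith))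
        (Set.Ioo_subset_Ioo (by linarith) (by linarith))
    have hI : (⋂ n : ℕ, Metric.ball x₀ (a₀ + 1/(n+1)) ×ˢ
        Set.Ioo (t₀ - (b₀ + 1/(n+1))) (t₀ + (b₀ + 1/(n+1))))
        = Metric.closedBall x₀ a₀ ×ˢ Set.Icc (t₀ - b₀) (t₀ + b₀) := by
      apply Set.Subset.antisymm
      · rintro ⟨x, t⟩ hz
        simp only [Set.mem_iInter, Set.mem_prod, Metric.mem_ball, Set.mem_Ioo] at hz
        simp only [Set.mem_prod, Metric.mem_closedBall, Set.mem_Icc]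
        refine ⟨?_, ?_, ?_⟩
        · by_contra hlt
          push_neg at hlt
          obtain ⟨n, hn⟩ := exists_nat_one_div_lt (show (0:ℝ) < dist x x₀ - a₀ by linarith)
          linarith [(hz n).1]
        · by_contra hlt
          push_neg at hlt
          obtain ⟨n, hn⟩ := exists_nat_one_div_lt (show (0:ℝ) < (t₀ - b₀) - t by linarith)
          linarith [(hz n).2.1]
        · by_contra hlt
          push_neg at hlt
          obtain ⟨n, hn⟩ := exists_nat_one_div_lt (show (0:ℝ) < t - (t₀ + b₀) by linarith)
          linarith [(hz n).2.2]
      · rintro ⟨x, t⟩ hz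
        simp only [Set.mem_prod, Metric.mem_closedBall, Set.mem_Icc] at hz
        refine Set.mem_iInter.2 fun n => ?_
        have h0 : (0:ℝ) < 1/(n+1) := by positivity
        simp only [Set.mem_prod, Metric.mem_ball, Set.mem_Ioo]
        exact ⟨by linarith [hz.1], by linarith [hz.2.1], by linarith [hz.2.2]⟩
    have hkey : ν (Metric.closedBall x₀ a₀ ×ˢ Set.Icc (t₀ - b₀) (t₀ + b₀)) = G (a₀, b₀) := by
      set B := Metric.ball x₀ a₀ ×ˢ Set.Ioo (t₀ - b₀) (t₀ + b₀) with hB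
      set A := Metric.closedBall x₀ a₀ ×ˢ Set.Icc (t₀ - b₀) (t₀ + b₀) with hA
      have hsub : B ⊆ A :=
        Set.prod_mono Metric.ball_subset_closedBall Set.Ioo_subset_Icc_self
      have hdiff : ν (A \ B) = 0 := by
        have hcover : A \ B ⊆ (Metric.sphere x₀ a₀ ×ˢ Set.Icc (t₀ - b₀) (t₀ + b₀)) ∪
            (Metric.closedBall x₀ a₀ ×ˢ ({t₀ - b₀, t₀ + b₀} : Set ℝ)) := by
          rintro ⟨x, t⟩ ⟨hzA, hzB⟩
          simp only [hA, Set.mem_prod, Metric.mem_closedBall, Set.mem_Icc] at hzA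
          by_cases hxb : x ∈ Metric.ball x₀ a₀
          · right
            refine ⟨hzA.1, ?_⟩
            have htno : t ∉ Set.Ioo (t₀ - b₀) (t₀ + b₀) := fun ht => hzB ⟨hxb, ht⟩
            simp only [Set.mem_Ioo, not_and_or, not_lt] at htno
            simp only [Set.mem_insert_iff, Set.mem_singleton_iff]
            rcases htno with h | h
            · exact Or.inl (le_antisymm h hzA.2.1)
            · exact Or.inr (le_antisymm hzA.2.2 h)
          · left
            refine ⟨?_, hzA.2⟩
            rw [Metric.mem_sphere]
            exact le_antisymm hzA.1 (not_lt.1 (fun h => hxb (Metric.mem_ball.2 h)))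
        refine measure_mono_null hcover (measure_union_null ?_ ?_)
        · apply hac
          rw [hvol_prod, Measure.addHaar_sphere]
          simp
        · apply hac
          rw [hvol_prod]
          have h2 : volume ({t₀ - b₀, t₀ + b₀} : Set ℝ) = 0 :=
            ((Set.finite_singleton _).insert _).measure_zero _
          rw [h2, mul_zero]
      refine le_antisymm ?_ (measure_mono hsub)
      calc ν A ≤ ν (B ∪ (A \ B)) :=
            measure_mono (fun z hz => (em (z ∈ B)).imp id (fun h => ⟨hz, h⟩))
        _ ≤ ν B + ν (A \ B) := measure_union_le _ _
        _ = ν B := by rw [hdiff, add_zero]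
    have h := tendsto_measure_iInter_atTop (μ := ν)
      (fun n => (measurableSet_ball.prod measurableSet_Ioo).nullMeasurableSet) hantiS ⟨0, hfin _⟩
    rw [hI, hkey] at h
    simpa [hGdef, Function.comp_def] using h
  have hGr_in : Tendsto (fun n : ℕ => (G (a₀ - 1/(n+1), b₀ - 1/(n+1))).toReal) atTop
      (𝓝 ((G (a₀, b₀)).toReal)) := (ENNReal.tendsto_toReal (hfin _)).comp hin
  have hGr_out : Tendsto (fun n : ℕ => (G (a₀ + 1/(n+1), b₀ + 1/(n+1))).toReal) atTop
      (𝓝 ((G (a₀, b₀)).toReal)) := (ENNReal.tendsto_toReal (hfin _)).comp hout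
  rw [Metric.continuousAt_iff]
  intro ε hε
  obtain ⟨n₁, hn₁⟩ := (hGr_in.eventually (eventually_gt_nhds
    (show (G (a₀, b₀)).toReal - ε/2 < (G (a₀, b₀)).toReal by linarith))).exists
  obtain ⟨n₂, hn₂⟩ := (hGr_out.eventually (eventually_lt_nhds
    (show (G (a₀, b₀)).toReal < (G (a₀, b₀)).toReal + ε/2 by linarith))).exists
  refine ⟨min (1/(n₁+1)) (1/(n₂+1)), by positivity, ?_⟩
  rintro ⟨a, b⟩ hdist
  rw [Prod.dist_eq] at hdist
  simp only [max_lt_iff] at hdist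
  have hda1 : |a - a₀| < 1/(n₁+1) := by
    rw [← Real.dist_eq]; exact lt_of_lt_of_le hdist.1 (min_le_left _ _)
  have hda2 : |a - a₀| < 1/(n₂+1) := by
    rw [← Real.dist_eq]; exact lt_of_lt_of_le hdist.1 (min_le_right _ _)
  have hdb1 : |b - b₀| < 1/(n₁+1) := by
    rw [← Real.dist_eq]; exact lt_of_lt_of_le hdist.2 (min_le_left _ _)
  have hdb2 : |b - b₀| < 1/(n₂+1) := by
    rw [← Real.dist_eq]; exact lt_of_lt_of_le hdist.2 (min_le_right _ _)
  have h1 : a₀ - 1/(n₁+1) ≤ a := by have := abs_sub_lt_iff.1 hda1; linarith [this.2]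
  have h2 : b₀ - 1/(n₁+1) ≤ b := by have := abs_sub_lt_iff.1 hdb1; linarith [this.2]
  have h3 : a ≤ a₀ + 1/(n₂+1) := by have := abs_sub_lt_iff.1 hda2; linarith [this.1]
  have h4 : b ≤ b₀ + 1/(n₂+1) := by have := abs_sub_lt_iff.1 hdb2; linarith [this.1]
  have hlow : (G (a₀ - 1/(n₁+1), b₀ - 1/(n₁+1))).toReal ≤ (G (a, b)).toReal :=
    ENNReal.toReal_mono (hfin _) (hmono _ _ _ _ h1 h2)
  have hhigh : (G (a, b)).toReal ≤ (G (a₀ + 1/(n₂+1), b₀ + 1/(n₂+1))).toReal :=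
    ENNReal.toReal_mono (hfin _) (hmono _ _ _ _ h3 h4)
  rw [Real.dist_eq, abs_sub_lt_iff]
  constructor <;> [linarith; linarith]
set_option maxHeartbeats 2000000

/-- Properties of the non-uniform system of sub-intrinsic cylinders (§8.1). -/
theorem nonuniform_cylinder_system_properties
    (N : ℕ) (hN : 3 ≤ N) (m r : ℝ)
    (hm : 0 < m) (hmc : m ≤ ((N : ℝ) - 2) / ((N : ℝ) + 2))
    (hr : 0 < r) (hlr : 0 < (N : ℝ) * (m - 1) + 2 * r)
    (k : ℕ) (hk : 1 ≤ k)
    (Ω : Set (Esp N)) (T : ℝ) (hΩ : IsOpen Ω) (hΩb : Bornology.IsBounded Ω) (hT : 0 < T)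
    (u : Spt N → Esp k) (hu : locLp r (fun z => ‖u z‖) (domPM Ω T))
    (w₀ : Spt N) (R lo : ℝ) (hR : 0 < R)
    (hQ : cylQ m w₀ (8 * R) ⊆ domPM Ω T)
    (hlo : 1 + (⨍ z in cylQ m w₀ (4 * R), ‖u z‖ ^ r / (4 * R) ^ (r / m))
            ^ ((m + 1) / (m * ((N : ℝ) * (m - 1) + 2 * r))) ≤ lo)
    (z₀ : Spt N) (hz₀ : z₀ ∈ cylQ m w₀ (2 * R)) :
    -- (i) continuity of ρ ↦ θ̃_{z₀;ρ}
    ContinuousOn (fun ρ => thetaTildeP m r lo u z₀ ρ) (Set.Ioc 0 R) ∧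
    -- (ii) sub-intrinsic property of the system
    (∀ ρ s : ℝ, 0 < ρ → ρ ≤ s → s ≤ R →
      (⨍ w in cylP m z₀ (thetaSys m r lo R u z₀ ρ) s, ‖u w‖ ^ r / s ^ (r / m)) ≤
        (thetaSys m r lo R u z₀ ρ) ^ (2 * r * m / (1 + m))) ∧
    -- (iii) growth bound
    (∀ ρ s : ℝ, 0 < ρ → ρ < s → s ≤ R →
      thetaSys m r lo R u z₀ ρ ≤
        (s / ρ) ^ ((1 + m) / (m * ((N : ℝ) * (m - 1) + 2 * r)) * ((N : ℝ) + 1 + (r + 1) / m))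
          * thetaSys m r lo R u z₀ s) ∧
    -- uniform bound
    (∀ ρ ∈ Set.Ioc (0:ℝ) R,
      thetaSys m r lo R u z₀ ρ ≤
        (4 * R / ρ) ^ ((1 + m) / (m * ((N : ℝ) * (m - 1) + 2 * r)) * ((N : ℝ) + 1 + (r + 1) / m))
          * lo) := by
  classical
  -- ====== basic numerology ======
  have hNpos : (0:ℝ) < (N:ℝ) := by
    have : 0 < N := by omega
    exact_mod_cast this
  have hm1 : m < 1 := by
    have hN2 : (0:ℝ) < (N:ℝ) + 2 := by linarith
    have h2 : ((N:ℝ) - 2) / ((N:ℝ) + 2) < 1 := by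
      rw [div_lt_one hN2]; linarith
    linarith
  have h1m : (0:ℝ) < 1 + m := by linarith
  have hmne : m ≠ 0 := ne_of_gt hm
  have hlrne : (N:ℝ) * (m - 1) + 2 * r ≠ 0 := ne_of_gt hlr
  haveI hNontriv : Nontrivial (Esp N) := by
    have h0 : 0 < N := by omega
    refine ⟨EuclideanSpace.single (⟨0, h0⟩ : Fin N) (1:ℝ), 0, fun h => ?_⟩
    have h2 := congrArg (fun v : Esp N => v (⟨0, h0⟩ : Fin N)) h
    simp [EuclideanSpace.single_apply] at h2
  set p : ℝ := (1 + m) / m with hp_def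
  have hp1 : 1 < p := by rw [hp_def, lt_div_iff₀ hm]; linarith
  have hppos : 0 < p := by linarith
  set c : ℝ := m * (m - 1) / (1 + m) with hc_def
  have hc0 : c ≤ 0 := div_nonpos_of_nonpos_of_nonneg (by nlinarith) h1m.le
  set e : ℝ := m * ((N:ℝ) * (m - 1) + 2 * r) / (1 + m) with he_def
  have he : 0 < e := div_pos (mul_pos hm hlr) h1m
  have hene : e ≠ 0 := ne_of_gt he
  set Ke : ℝ := (1 + m) / (m * ((N:ℝ) * (m - 1) + 2 * r)) * ((N:ℝ) + 1 + (r + 1) / m)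
    with hKe_def
  have hKepos : 0 < Ke := by
    apply mul_pos (div_pos h1m (mul_pos hm hlr))
    have : 0 < (r + 1) / m := by positivity
    linarith
  set KK : ℝ := r / m + (N:ℝ) + p with hKK_def
  have hKKe : Ke * e = KK := by
    rw [hKe_def, he_def, hKK_def, hp_def]
    field_simp
    ring
  have hxKe : ∀ x : ℝ, 0 ≤ x → (x ^ Ke) ^ e = x ^ KK := by
    intro x hx
    rw [← Real.rpow_mul hx, hKKe]
  -- ====== lo ≥ 1 ======
  set A4 : ℝ := ⨍ z in cylQ m w₀ (4 * R), ‖u z‖ ^ r / (4 * R) ^ (r / m) with hA4_def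
  have hA4nn : 0 ≤ A4 := by
    rw [hA4_def, setAverage_eq, smul_eq_mul]
    apply mul_nonneg (inv_nonneg.2 ENNReal.toReal_nonneg)
    exact integral_nonneg fun z => by positivity
  have hlo1 : 1 ≤ lo :=
    le_trans (le_add_of_nonneg_right (Real.rpow_nonneg hA4nn _)) hlo
  have hlopos : (0:ℝ) < lo := by linarith
  -- ====== volumes ======
  set vbR : ℝ := (volume (Metric.ball (0 : Esp N) 1)).toReal with hvbR_def
  have hvbRpos : 0 < vbR := by
    rw [hvbR_def]
    exact ENNReal.toReal_pos (Metric.measure_ball_pos volume 0 one_pos).ne'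
      measure_ball_lt_top.ne
  set VV : ℝ → ℝ := fun ρ => vbR * (ρ ^ ((N:ℝ)) * (2 * ρ ^ p)) with hVV_def
  have hVVpos : ∀ ρ : ℝ, 0 < ρ → 0 < VV ρ := by
    intro ρ hρ
    exact mul_pos hvbRpos (mul_pos (Real.rpow_pos_of_pos hρ _)
      (mul_pos two_pos (Real.rpow_pos_of_pos hρ _)))
  have hcylP : ∀ (z : Spt N) (θ ρ : ℝ), cylP m z θ ρ =
      Metric.ball z.1 (θ ^ c * ρ) ×ˢ Set.Ioo (z.2 - ρ ^ p) (z.2 + ρ ^ p) := by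
    intro z θ ρ
    rw [cylP, ballP, lamI, hc_def, hp_def]
  have hcylQ : ∀ (z : Spt N) (ρ : ℝ), cylQ m z ρ =
      Metric.ball z.1 ρ ×ˢ Set.Ioo (z.2 - ρ ^ p) (z.2 + ρ ^ p) := by
    intro z ρ
    rw [cylQ, hcylP, Real.one_rpow, one_mul]
  have hmeasP : ∀ (z : Spt N) (θ ρ : ℝ), MeasurableSet (cylP m z θ ρ) := by
    intro z θ ρ
    rw [hcylP]
    exact (measurableSet_ball.prod measurableSet_Ioo)
  have hvol_prod : ∀ (s : Set (Esp N)) (t : Set ℝ),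
      (volume : Measure (Spt N)) (s ×ˢ t) = volume s * volume t := by
    intro s t
    rw [Measure.volume_eq_prod]
    exact Measure.prod_prod s t
  have hθc_pos : ∀ θ : ℝ, 0 < θ → 0 < θ ^ c := fun θ hθ => Real.rpow_pos_of_pos hθ c
  have hvolP : ∀ (z : Spt N) (θ ρ : ℝ), 0 < θ → 0 < ρ →
      (volume (cylP m z θ ρ)).toReal = θ ^ (c * (N:ℝ)) * VV ρ := by
    intro z θ ρ hθ hρ
    have hrad : 0 ≤ θ ^ c * ρ := (mul_pos (hθc_pos θ hθ) hρ).le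
    have hρp : (0:ℝ) < ρ ^ p := Real.rpow_pos_of_pos hρ _
    rw [hcylP, hvol_prod, Measure.addHaar_ball volume z.1 hrad, Real.volume_Ioo,
      finrank_euclideanSpace_fin, ENNReal.toReal_mul, ENNReal.toReal_mul,
      ENNReal.toReal_ofReal (by positivity), ENNReal.toReal_ofReal (by linarith)]
    have h1 : (θ ^ c * ρ) ^ (N:ℕ) = θ ^ (c * (N:ℝ)) * ρ ^ ((N:ℝ)) := by
      rw [mul_pow, ← Real.rpow_natCast (θ ^ c) N, ← Real.rpow_natCast ρ N,
        ← Real.rpow_mul hθ.le]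
    have h2 : z.2 + ρ ^ p - (z.2 - ρ ^ p) = 2 * ρ ^ p := by ring
    rw [h1, h2, hVV_def]
    ring
  have hvolQ : ∀ (z : Spt N) (ρ : ℝ), 0 < ρ → (volume (cylQ m z ρ)).toReal = VV ρ := by
    intro z ρ hρ
    rw [cylQ, hvolP z 1 ρ one_pos hρ, Real.one_rpow, one_mul]
  -- ====== subset lemmas ======
  have hsubset : ∀ (z z' : Spt N) (a a' b b' : ℝ), a + dist z.1 z'.1 ≤ a' →
      b + |z.2 - z'.2| ≤ b' →
      Metric.ball z.1 a ×ˢ Set.Ioo (z.2 - b) (z.2 + b) ⊆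
        Metric.ball z'.1 a' ×ˢ Set.Ioo (z'.2 - b') (z'.2 + b') := by
    rintro z z' a a' b b' h1 h2 ⟨x, t⟩ ⟨hx, ht⟩
    simp only [Metric.mem_ball, Set.mem_Ioo] at hx ht ⊢
    have h3 : z.2 - z'.2 ≤ |z.2 - z'.2| := le_abs_self _
    have h4 : -(|z.2 - z'.2|) ≤ z.2 - z'.2 := neg_abs_le _
    refine ⟨?_, by linarith [ht.1], by linarith [ht.2]⟩
    calc dist x z'.1 ≤ dist x z.1 + dist z.1 z'.1 := dist_triangle _ _ _
      _ < a + dist z.1 z'.1 := by linarith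
      _ ≤ a' := h1
  have hz0 : dist z₀.1 w₀.1 < 2 * R ∧ |z₀.2 - w₀.2| < (2 * R) ^ p := by
    have h := hz₀
    rw [hcylQ] at h
    obtain ⟨h1, h2⟩ := h
    rw [Metric.mem_ball] at h1
    rw [Set.mem_Ioo] at h2
    exact ⟨h1, abs_sub_lt_iff.2 ⟨by linarith [h2.2], by linarith [h2.1]⟩⟩
  have h2p : (2:ℝ) ≤ 2 ^ p := by
    calc (2:ℝ) = 2 ^ (1:ℝ) := (Real.rpow_one 2).symm
      _ ≤ 2 ^ p := Real.rpow_le_rpow_of_exponent_le one_le_two hp1.le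
  have h2Rp : (2 * R) ^ p + (2 * R) ^ p ≤ (4 * R) ^ p := by
    have hkey : (4 * R) ^ p = 2 ^ p * (2 * R) ^ p := by
      rw [show (4 * R : ℝ) = 2 * (2 * R) by ring,
        Real.mul_rpow (by norm_num) (by positivity)]
    have hpos : (0:ℝ) < (2 * R) ^ p := Real.rpow_pos_of_pos (by positivity) p
    nlinarith
  have hθc_le_one : ∀ θ : ℝ, 1 ≤ θ → θ ^ c ≤ 1 :=
    fun θ hθ => Real.rpow_le_one_of_one_le_of_nonpos hθ hc0
  have hθc_le_two : ∀ θ : ℝ, 1/2 ≤ θ → θ ^ c ≤ 2 := by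
    intro θ hθ
    have h1 : θ ^ c ≤ (1/2 : ℝ) ^ c :=
      Real.rpow_le_rpow_of_nonpos (by norm_num) hθ hc0
    have h2 : ((1:ℝ)/2) ^ c = 2 ^ (-c) := by
      rw [one_div, Real.inv_rpow (by norm_num : (0:ℝ) ≤ 2),
        ← Real.rpow_neg (by norm_num : (0:ℝ) ≤ 2)]
    have h3 : (2:ℝ) ^ (-c) ≤ 2 ^ (1:ℝ) := by
      apply Real.rpow_le_rpow_of_exponent_le one_le_two
      rw [hc_def, neg_le, le_div_iff₀ h1m]
      nlinarith
    rw [Real.rpow_one] at h3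
    linarith
  have hsub4 : ∀ θ ρ : ℝ, 1 ≤ θ → 0 < ρ → ρ ≤ 2 * R → cylP m z₀ θ ρ ⊆ cylQ m w₀ (4 * R) := by
    intro θ ρ hθ hρ hρR
    rw [hcylP, hcylQ]
    apply hsubset
    · have h1 : θ ^ c * ρ ≤ ρ := by
        have := hθc_le_one θ hθ
        nlinarith
      linarith [hz0.1]
    · have h1 : ρ ^ p ≤ (2 * R) ^ p := Real.rpow_le_rpow hρ.le hρR hppos.le
      linarith [hz0.2, h2Rp]
  have hsub6 : ∀ θ ρ : ℝ, 1/2 ≤ θ → 0 < ρ → ρ ≤ 2 * R → cylP m z₀ θ ρ ⊆ cylQ m w₀ (6 * R) := by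
    intro θ ρ hθ hρ hρR
    rw [hcylP, hcylQ]
    apply hsubset
    · have h1 : θ ^ c * ρ ≤ 2 * ρ := by
        have := hθc_le_two θ hθ
        nlinarith
      linarith [hz0.1]
    · have h1 : ρ ^ p ≤ (2 * R) ^ p := Real.rpow_le_rpow hρ.le hρR hppos.le
      have h2 : (4 * R) ^ p ≤ (6 * R) ^ p :=
        Real.rpow_le_rpow (by positivity) (by linarith) hppos.le
      linarith [hz0.2, h2Rp]
  have hQ46 : cylQ m w₀ (4 * R) ⊆ cylQ m w₀ (6 * R) := by
    rw [hcylQ, hcylQ]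
    have h2 : (4 * R) ^ p ≤ (6 * R) ^ p :=
      Real.rpow_le_rpow (by positivity) (by linarith) hppos.le
    exact Set.prod_mono (Metric.ball_subset_ball (by linarith))
      (Set.Ioo_subset_Ioo (by linarith) (by linarith))
  -- ====== integrability on Q6 ======
  have hInt6 : Integrable (fun z => ‖u z‖ ^ r) (volume.restrict (cylQ m w₀ (6 * R))) := by
    have hb : Bornology.IsBounded (cylQ m w₀ (6 * R)) := by
      rw [hcylQ]
      exact Metric.isBounded_ball.prod (Metric.isBounded_Ioo _ _)
    have hKcpt : IsCompact (closure (cylQ m w₀ (6 * R))) :=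
      Metric.isCompact_of_isClosed_isBounded isClosed_closure hb.closure
    have hKsub : closure (cylQ m w₀ (6 * R)) ⊆ domPM Ω T := by
      refine subset_trans ?_ hQ
      rw [hcylQ, hcylQ]
      rw [closure_prod_eq]
      intro z hz
      obtain ⟨h1, h2⟩ := hz
      have h1' : dist z.1 w₀.1 ≤ 6 * R := Metric.closure_ball_subset_closedBall h1
      have h2' : z.2 ∈ Set.Icc (w₀.2 - (6 * R) ^ p) (w₀.2 + (6 * R) ^ p) :=
        (closure_minimal Set.Ioo_subset_Icc_self isClosed_Icc) h2
      have hlt : (6 * R) ^ p < (8 * R) ^ p :=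
        Real.rpow_lt_rpow (by positivity) (by linarith) hppos
      exact ⟨Metric.mem_ball.2 (by linarith), Set.mem_Ioo.2
        ⟨by linarith [h2'.1], by linarith [h2'.2]⟩⟩
    have hmem := hu (closure (cylQ m w₀ (6 * R))) hKsub hKcpt
    have h1 : Integrable (fun z => ‖‖u z‖‖ ^ (ENNReal.ofReal r).toReal)
        (volume.restrict (closure (cylQ m w₀ (6 * R)))) :=
      hmem.integrable_norm_rpow (by simp [ENNReal.ofReal_eq_zero, not_le, hr])
        ENNReal.ofReal_ne_top
    rw [ENNReal.toReal_ofReal hr.le] at h1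
    simp only [norm_norm] at h1
    exact h1.mono_measure (Measure.restrict_mono subset_closure le_rfl)
  have hIntOn : ∀ s : Set (Spt N), s ⊆ cylQ m w₀ (6 * R) →
      Integrable (fun z => ‖u z‖ ^ r) (volume.restrict s) :=
    fun s hs => hInt6.mono_measure (Measure.restrict_mono hs le_rfl)
  -- ====== the measure ν and the function Fν ======
  set ν : Measure (Spt N) :=
    (volume.restrict (cylQ m w₀ (6 * R))).withDensity (fun z => ENNReal.ofReal (‖u z‖ ^ r))
    with hν_def
  haveI hνfin : IsFiniteMeasure ν := by
    constructor
    rw [hν_def, withDensity_apply _ MeasurableSet.univ, Measure.restrict_univ]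
    calc ∫⁻ z, ENNReal.ofReal (‖u z‖ ^ r) ∂(volume.restrict (cylQ m w₀ (6 * R)))
        = ENNReal.ofReal (∫ z in cylQ m w₀ (6 * R), ‖u z‖ ^ r) :=
          (ofReal_integral_eq_lintegral_ofReal hInt6
            (Filter.Eventually.of_forall fun z => by positivity)).symm
      _ < ⊤ := ENNReal.ofReal_lt_top
  have hνac : ν ≪ (volume : Measure (Spt N)) :=
    (withDensity_absolutelyContinuous _ _).trans
      (Measure.absolutelyContinuous_of_le Measure.restrict_le_self)
  set Fν : ℝ × ℝ → ℝ := fun ab =>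
    (ν (Metric.ball z₀.1 ab.1 ×ˢ Set.Ioo (z₀.2 - ab.2) (z₀.2 + ab.2))).toReal with hF_def
  have hFcont : ∀ a b : ℝ, 0 < a → 0 < b → ContinuousAt Fν (a, b) :=
    fun a b ha hb => measCont ν hνac z₀.1 z₀.2 a b ha hb
  set J : ℝ → ℝ → ℝ := fun ρ θ => ∫ w in cylP m z₀ θ ρ, ‖u w‖ ^ r with hJ_def
  have hJnn : ∀ ρ θ : ℝ, 0 ≤ J ρ θ := fun ρ θ => integral_nonneg fun w => by positivity
  have hJF : ∀ θ ρ : ℝ, 1/2 ≤ θ → 0 < ρ → ρ ≤ 2 * R → J ρ θ = Fν (θ ^ c * ρ, ρ ^ p) := by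
    intro θ ρ hθ hρ hρR
    have hsub := hsub6 θ ρ hθ hρ hρR
    rw [hJ_def, hF_def]
    simp only
    rw [show Metric.ball z₀.1 (θ ^ c * ρ) ×ˢ Set.Ioo (z₀.2 - ρ ^ p) (z₀.2 + ρ ^ p)
      = cylP m z₀ θ ρ from (hcylP _ _ _).symm]
    rw [hν_def, withDensity_apply _ (hmeasP _ _ _), Measure.restrict_restrict (hmeasP _ _ _),
      Set.inter_eq_self_of_subset_left hsub,
      ← ofReal_integral_eq_lintegral_ofReal (hIntOn _ hsub)
        (Filter.Eventually.of_forall fun z => by positivity),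
      ENNReal.toReal_ofReal (integral_nonneg fun z => by positivity)]
  have hJmono : ∀ θ θ' ρ ρ' : ℝ, 1 ≤ θ' → θ' ≤ θ → 0 < ρ → ρ ≤ ρ' → ρ' ≤ 2 * R →
      J ρ θ ≤ J ρ' θ' := by
    intro θ θ' ρ ρ' hθ'1 hθθ' hρ hρρ' hρ'R
    have hθ'pos : (0:ℝ) < θ' := by linarith
    have hsub : cylP m z₀ θ ρ ⊆ cylP m z₀ θ' ρ' := by
      rw [hcylP, hcylP]
      apply hsubset
      · simp only [dist_self, add_zero]
        have h1 : θ ^ c ≤ θ' ^ c := Real.rpow_le_rpow_of_nonpos hθ'pos hθθ' hc0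
        have h2 : (0:ℝ) < θ ^ c := hθc_pos θ (by linarith)
        nlinarith
      · simp only [sub_self, abs_zero, add_zero]
        exact Real.rpow_le_rpow hρ.le hρρ' hppos.le
    exact setIntegral_mono_set
      (hIntOn _ (hsub6 θ' ρ' (by linarith) (lt_of_lt_of_le hρ hρρ') hρ'R))
      (Filter.Eventually.of_forall fun w => by positivity)
      (HasSubset.Subset.eventuallyLE hsub)
  have hJle6 : ∀ ρ θ : ℝ, 1/2 ≤ θ → 0 < ρ → ρ ≤ 2 * R →
      J ρ θ ≤ ∫ z in cylQ m w₀ (6 * R), ‖u z‖ ^ r := by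
    intro ρ θ hθ hρ hρR
    exact setIntegral_mono_set hInt6 (Filter.Eventually.of_forall fun w => by positivity)
      (HasSubset.Subset.eventuallyLE (hsub6 θ ρ hθ hρ hρR))
  have hJle4 : ∀ ρ θ : ℝ, 1 ≤ θ → 0 < ρ → ρ ≤ 2 * R →
      J ρ θ ≤ ∫ z in cylQ m w₀ (4 * R), ‖u z‖ ^ r := by
    intro ρ θ hθ hρ hρR
    exact setIntegral_mono_set (hIntOn _ hQ46)
      (Filter.Eventually.of_forall fun w => by positivity)
      (HasSubset.Subset.eventuallyLE (hsub4 θ ρ hθ hρ hρR))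
  -- ====== φ and the defining sets ======
  set φf : ℝ → ℝ → ℝ := fun ρ θ => J ρ θ / (ρ ^ (r/m) * VV ρ) with hφ_def
  have hdenpos : ∀ ρ : ℝ, 0 < ρ → 0 < ρ ^ (r/m) * VV ρ :=
    fun ρ hρ => mul_pos (Real.rpow_pos_of_pos hρ _) (hVVpos ρ hρ)
  have hφanti : ∀ ρ θ θ' : ℝ, 0 < ρ → ρ ≤ 2 * R → 1 ≤ θ' → θ' ≤ θ → φf ρ θ ≤ φf ρ θ' :=
    fun ρ θ θ' hρ hρR hθ'1 hθθ' =>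
      (div_le_div_iff_of_pos_right (hdenpos ρ hρ)).2 (hJmono θ θ' ρ ρ hθ'1 hθθ' hρ le_rfl hρR)
  set SS : ℝ → Set ℝ := fun ρ => {θ : ℝ | lo ≤ θ ∧ φf ρ θ ≤ θ ^ e} with hSS_def
  set θt : ℝ → ℝ := fun ρ => sInf (SS ρ) with hθt_def
  have hTT : ∀ ρ : ℝ, 0 < ρ → thetaTildeP m r lo u z₀ ρ = θt ρ := by
    intro ρ hρ
    rw [thetaTildeP, hθt_def]
    congr 1
    ext θ
    simp only [hSS_def, Set.mem_setOf_eq, hφ_def, hJ_def, ← he_def]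
    rw [integral_div, hvolQ z₀ ρ hρ, div_div]
  have hden_eq : ∀ ρ : ℝ, 0 < ρ → ρ ^ (r/m) * VV ρ = (2 * vbR) * ρ ^ KK := by
    intro ρ hρ
    rw [hVV_def, hKK_def]
    simp only
    rw [Real.rpow_add hρ, Real.rpow_add hρ]
    ring
  have hratio : ∀ a τ σ : ℝ, 0 < τ → 0 < σ →
      a / (τ ^ (r/m) * VV τ) = a / (σ ^ (r/m) * VV σ) * (σ / τ) ^ KK := by
    intro a τ σ hτ hσ
    rw [hden_eq τ hτ, hden_eq σ hσ, Real.div_rpow hσ.le hτ.le]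
    have h1 : (0:ℝ) < τ ^ KK := Real.rpow_pos_of_pos hτ _
    have h2 : (0:ℝ) < σ ^ KK := Real.rpow_pos_of_pos hσ _
    field_simp
  have hSne : ∀ ρ : ℝ, 0 < ρ → ρ ≤ 2 * R → (SS ρ).Nonempty := by
    intro ρ hρ hρR
    set M : ℝ := (∫ z in cylQ m w₀ (6 * R), ‖u z‖ ^ r) / (ρ ^ (r/m) * VV ρ) with hM_def
    have hM0 : 0 ≤ M :=
      div_nonneg (integral_nonneg fun z => by positivity) (hdenpos ρ hρ).le
    refine ⟨max lo (max 1 (M ^ (1/e))), le_max_left _ _, ?_⟩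
    have hθ1 : (1:ℝ) ≤ max lo (max 1 (M ^ (1/e))) :=
      le_trans (le_max_left _ _) (le_max_right _ _)
    have hφM : φf ρ (max lo (max 1 (M ^ (1/e)))) ≤ M :=
      (div_le_div_iff_of_pos_right (hdenpos ρ hρ)).2 (hJle6 ρ _ (by linarith) hρ hρR)
    have hMe : M ≤ (max lo (max 1 (M ^ (1/e)))) ^ e := by
      have h1 : M = (M ^ (1/e)) ^ e := by
        rw [← Real.rpow_mul hM0, one_div, inv_mul_cancel₀ hene, Real.rpow_one]
      calc M = (M ^ (1/e)) ^ e := h1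
        _ ≤ (max lo (max 1 (M ^ (1/e)))) ^ e :=
          Real.rpow_le_rpow (Real.rpow_nonneg hM0 _)
            (le_trans (le_max_right _ _) (le_max_right _ _)) he.le
    exact le_trans hφM hMe
  have hbddb : ∀ ρ : ℝ, BddBelow (SS ρ) := fun ρ => ⟨lo, fun θ hθ => hθ.1⟩
  have hθt_lo : ∀ ρ : ℝ, 0 < ρ → ρ ≤ 2 * R → lo ≤ θt ρ :=
    fun ρ hρ hρR => le_csInf (hSne ρ hρ hρR) fun θ hθ => hθ.1
  have hφcontθ : ∀ ρ θ₀ : ℝ, 0 < ρ → ρ ≤ 2 * R → 1 ≤ θ₀ →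
      ContinuousAt (fun θ => φf ρ θ) θ₀ := by
    intro ρ θ₀ hρ hρR hθ₀
    have hθ₀pos : (0:ℝ) < θ₀ := by linarith
    have h1 : ContinuousAt (fun θ : ℝ => Fν (θ ^ c * ρ, ρ ^ p) / (ρ ^ (r/m) * VV ρ)) θ₀ := by
      apply ContinuousAt.div _ continuousAt_const (ne_of_gt (hdenpos ρ hρ))
      have hinner : ContinuousAt (fun θ : ℝ => (θ ^ c * ρ, ρ ^ p)) θ₀ :=
        ((Real.continuousAt_rpow_const θ₀ c (Or.inl hθ₀pos.ne')).mul
          continuousAt_const).prodMk continuousAt_const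
      exact ContinuousAt.comp (g := Fν) (f := fun θ : ℝ => (θ ^ c * ρ, ρ ^ p))
        (hFcont _ _ (mul_pos (hθc_pos _ hθ₀pos) hρ) (Real.rpow_pos_of_pos hρ p)) hinner
    have h2 : (fun θ => φf ρ θ) =ᶠ[𝓝 θ₀]
        (fun θ => Fν (θ ^ c * ρ, ρ ^ p) / (ρ ^ (r/m) * VV ρ)) := by
      filter_upwards [Ioi_mem_nhds (show (1:ℝ)/2 < θ₀ by linarith)] with θ hθ
      simp only [hφ_def]
      rw [hJF θ ρ (le_of_lt hθ) hρ hρR]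
    rw [continuousAt_congr h2]
    exact h1
  have hmemS : ∀ ρ : ℝ, 0 < ρ → ρ ≤ 2 * R → θt ρ ∈ SS ρ := by
    intro ρ hρ hρR
    obtain ⟨w, -, hwt, hwS⟩ := exists_seq_tendsto_sInf (hSne ρ hρ hρR) (hbddb ρ)
    have hlo_le : lo ≤ θt ρ := hθt_lo ρ hρ hρR
    have hθt1 : (1:ℝ) ≤ θt ρ := le_trans hlo1 hlo_le
    refine ⟨hlo_le, ?_⟩
    have hψ : ContinuousAt (fun θ => φf ρ θ - θ ^ e) (θt ρ) :=
      (hφcontθ ρ _ hρ hρR hθt1).sub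
        (Real.continuousAt_rpow_const _ _ (Or.inl (by linarith)))
    have hle : ∀ n, φf ρ (w n) - (w n) ^ e ≤ 0 := fun n => sub_nonpos.2 (hwS n).2
    have h2 := le_of_tendsto (hψ.tendsto.comp hwt) (Filter.Eventually.of_forall hle)
    have h3 : φf ρ (θt ρ) - (θt ρ) ^ e ≤ 0 := h2
    linarith
  have hF6 : ∀ ρ θ : ℝ, 0 < ρ → ρ ≤ 2 * R → θt ρ ≤ θ → φf ρ θ ≤ θ ^ e := by
    intro ρ θ hρ hρR hθ
    have h1 : (1:ℝ) ≤ θt ρ := le_trans hlo1 (hθt_lo ρ hρ hρR)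
    calc φf ρ θ ≤ φf ρ (θt ρ) := hφanti ρ θ (θt ρ) hρ hρR h1 hθ
      _ ≤ (θt ρ) ^ e := (hmemS ρ hρ hρR).2
      _ ≤ θ ^ e := Real.rpow_le_rpow (by linarith) hθ he.le
  -- ====== uniform bound for θt ======
  have hA4e : A4 ≤ lo ^ e := by
    have h2 : (m + 1) / (m * ((N:ℝ) * (m - 1) + 2 * r)) = 1/e := by
      rw [he_def]
      field_simp
      ring
    have h1 : A4 ^ ((1:ℝ)/e) ≤ lo - 1 := by
      have h5 := hlo
      rw [h2] at h5
      linarith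
    have h0 : 0 ≤ A4 ^ ((1:ℝ)/e) := Real.rpow_nonneg hA4nn _
    have h3 : A4 = (A4 ^ ((1:ℝ)/e)) ^ e := by
      rw [← Real.rpow_mul hA4nn, one_div, inv_mul_cancel₀ hene, Real.rpow_one]
    calc A4 = (A4 ^ ((1:ℝ)/e)) ^ e := h3
      _ ≤ (lo - 1) ^ e := Real.rpow_le_rpow h0 h1 he.le
      _ ≤ lo ^ e := Real.rpow_le_rpow (by linarith) (by linarith) he.le
  have hJ4eq : (∫ z in cylQ m w₀ (4 * R), ‖u z‖ ^ r)
      = A4 * ((4 * R) ^ (r/m) * VV (4 * R)) := by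
    have h4R : (0:ℝ) < 4 * R := by linarith
    have hd := hdenpos (4 * R) h4R
    have hAeq : A4 = (∫ z in cylQ m w₀ (4 * R), ‖u z‖ ^ r) / ((4 * R) ^ (r/m) * VV (4 * R)) := by
      rw [hA4_def, setAverage_eq, integral_div, measureReal_def, hvolQ w₀ _ h4R, smul_eq_mul,
        inv_mul_eq_div, div_div]
    rw [hAeq, div_mul_cancel₀ _ (ne_of_gt hd)]
  have hup : ∀ τ : ℝ, 0 < τ → τ ≤ R → θt τ ≤ (4 * R / τ) ^ Ke * lo := by
    intro τ hτ hτR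
    have hτ2R : τ ≤ 2 * R := by linarith
    have h4R : (0:ℝ) < 4 * R := by linarith
    have h4τ : (1:ℝ) ≤ 4 * R / τ := by rw [le_div_iff₀ hτ]; linarith
    have hβ1 : (1:ℝ) ≤ (4 * R / τ) ^ Ke := by
      calc (1:ℝ) = 1 ^ Ke := (Real.one_rpow _).symm
        _ ≤ (4 * R / τ) ^ Ke := Real.rpow_le_rpow zero_le_one h4τ hKepos.le
    have hθ1 : (1:ℝ) ≤ (4 * R / τ) ^ Ke * lo :=
      le_trans hlo1 (le_mul_of_one_le_left hlopos.le hβ1)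
    apply csInf_le (hbddb τ)
    refine ⟨le_mul_of_one_le_left hlopos.le hβ1, ?_⟩
    have hpoweq : ((4 * R / τ) ^ Ke * lo) ^ e = (4 * R / τ) ^ KK * lo ^ e := by
      rw [Real.mul_rpow (Real.rpow_nonneg (by positivity) _) hlopos.le,
        hxKe _ (by positivity)]
    calc φf τ ((4 * R / τ) ^ Ke * lo)
        ≤ (∫ z in cylQ m w₀ (4 * R), ‖u z‖ ^ r) / (τ ^ (r/m) * VV τ) :=
          (div_le_div_iff_of_pos_right (hdenpos τ hτ)).2 (hJle4 τ _ hθ1 hτ hτ2R)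
      _ = (∫ z in cylQ m w₀ (4 * R), ‖u z‖ ^ r) / ((4 * R) ^ (r/m) * VV (4 * R))
            * (4 * R / τ) ^ KK := hratio _ τ (4 * R) hτ h4R
      _ = A4 * (4 * R / τ) ^ KK := by
          rw [hJ4eq, mul_div_assoc, div_self (ne_of_gt (hdenpos (4 * R) h4R)), mul_one]
      _ ≤ lo ^ e * (4 * R / τ) ^ KK :=
          mul_le_mul_of_nonneg_right hA4e (Real.rpow_nonneg (by positivity) _)
      _ = ((4 * R / τ) ^ Ke * lo) ^ e := by rw [hpoweq]; ring
  -- ====== growth bound for θt ======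
  have hgrow : ∀ τ σ : ℝ, 0 < τ → τ ≤ σ → σ ≤ 2 * R → θt τ ≤ (σ / τ) ^ Ke * θt σ := by
    intro τ σ hτ hτσ hσR
    have hσ : 0 < σ := lt_of_lt_of_le hτ hτσ
    have h1σ : (1:ℝ) ≤ σ / τ := (one_le_div hτ).2 hτσ
    have hβ1 : (1:ℝ) ≤ (σ / τ) ^ Ke := by
      calc (1:ℝ) = 1 ^ Ke := (Real.one_rpow _).symm
        _ ≤ (σ / τ) ^ Ke := Real.rpow_le_rpow zero_le_one h1σ hKepos.le
    have hθσlo : lo ≤ θt σ := hθt_lo σ hσ hσR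
    have hθσ1 : (1:ℝ) ≤ θt σ := le_trans hlo1 hθσlo
    apply csInf_le (hbddb τ)
    refine ⟨le_trans hθσlo (le_mul_of_one_le_left (by linarith) hβ1), ?_⟩
    have hJle : J τ ((σ / τ) ^ Ke * θt σ) ≤ J σ (θt σ) :=
      hJmono _ _ τ σ hθσ1 (le_mul_of_one_le_left (by linarith) hβ1) hτ hτσ hσR
    have hpoweq : ((σ / τ) ^ Ke * θt σ) ^ e = (σ / τ) ^ KK * (θt σ) ^ e := by
      rw [Real.mul_rpow (Real.rpow_nonneg (div_nonneg hσ.le hτ.le) _) (by linarith),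
        hxKe _ (div_nonneg hσ.le hτ.le)]
    calc φf τ ((σ / τ) ^ Ke * θt σ)
        ≤ J σ (θt σ) / (τ ^ (r/m) * VV τ) := (div_le_div_iff_of_pos_right (hdenpos τ hτ)).2 hJle
      _ = J σ (θt σ) / (σ ^ (r/m) * VV σ) * (σ / τ) ^ KK := hratio _ τ σ hτ hσ
      _ ≤ (θt σ) ^ e * (σ / τ) ^ KK :=
          mul_le_mul_of_nonneg_right ((hmemS σ hσ hσR).2)
            (Real.rpow_nonneg (div_nonneg hσ.le hτ.le) _)
      _ = ((σ / τ) ^ Ke * θt σ) ^ e := by rw [hpoweq]; ring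
  -- ====== the monotone system Θ ======
  have hΘ_def : ∀ ρ : ℝ, 0 < ρ → thetaSys m r lo R u z₀ ρ = sSup (θt '' Set.Icc ρ R) := by
    intro ρ hρ
    rw [thetaSys]
    congr 1
    apply Set.image_congr
    intro s hs
    exact hTT s (lt_of_lt_of_le hρ hs.1)
  have hbddA : ∀ ρ : ℝ, 0 < ρ → BddAbove (θt '' Set.Icc ρ R) := by
    intro ρ hρ
    refine ⟨(4 * R / ρ) ^ Ke * lo, ?_⟩
    rintro x ⟨τ, hτ, rfl⟩
    have hτ0 : 0 < τ := lt_of_lt_of_le hρ hτ.1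
    calc θt τ ≤ (4 * R / τ) ^ Ke * lo := hup τ hτ0 hτ.2
      _ ≤ (4 * R / ρ) ^ Ke * lo := by
          apply mul_le_mul_of_nonneg_right _ hlopos.le
          exact Real.rpow_le_rpow (div_nonneg (by linarith) hτ0.le)
            (div_le_div_of_nonneg_left (by linarith) hρ hτ.1) hKepos.le
  -- ====== conclusion ======
  refine ⟨?_, ?_, ?_, ?_⟩
  · -- (i) continuity
    intro ρ₀ hρ₀
    obtain ⟨hρ₀0, hρ₀R⟩ := hρ₀
    have h2R0 : ρ₀ < 2 * R := by linarith
    apply ContinuousAt.continuousWithinAt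
    have hφcontρ : ∀ θ : ℝ, 1 ≤ θ → ContinuousAt (fun ρ => φf ρ θ) ρ₀ := by
      intro θ hθ1
      have hθpos : (0:ℝ) < θ := by linarith
      have h1 : ContinuousAt (fun ρ : ℝ => Fν (θ ^ c * ρ, ρ ^ p) / (ρ ^ (r/m) * VV ρ)) ρ₀ := by
        apply ContinuousAt.div
        · have hinner : ContinuousAt (fun ρ : ℝ => (θ ^ c * ρ, ρ ^ p)) ρ₀ :=
            (continuousAt_const.mul continuousAt_id).prodMk
              (Real.continuousAt_rpow_const ρ₀ p (Or.inl hρ₀0.ne'))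
          exact ContinuousAt.comp (g := Fν) (f := fun ρ : ℝ => (θ ^ c * ρ, ρ ^ p))
            (hFcont _ _ (mul_pos (hθc_pos θ hθpos) hρ₀0) (Real.rpow_pos_of_pos hρ₀0 p)) hinner
        · apply ContinuousAt.mul (Real.continuousAt_rpow_const ρ₀ (r/m) (Or.inl hρ₀0.ne'))
          simp only [hVV_def]
          exact continuousAt_const.mul
            ((Real.continuousAt_rpow_const ρ₀ ((N:ℝ)) (Or.inl hρ₀0.ne')).mul
              (continuousAt_const.mul (Real.continuousAt_rpow_const ρ₀ p (Or.inl hρ₀0.ne'))))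
        · exact ne_of_gt (hdenpos ρ₀ hρ₀0)
      have h2 : (fun ρ => φf ρ θ) =ᶠ[𝓝 ρ₀]
          (fun ρ => Fν (θ ^ c * ρ, ρ ^ p) / (ρ ^ (r/m) * VV ρ)) := by
        filter_upwards [Ioo_mem_nhds hρ₀0 h2R0] with ρ hρ
        simp only [hφ_def]
        rw [hJF θ ρ (by linarith) hρ.1 hρ.2.le]
      rw [continuousAt_congr h2]
      exact h1
    have hθtcont : ContinuousAt θt ρ₀ := by
      rw [Metric.continuousAt_iff]
      intro ε hε
      have hθ₀lo : lo ≤ θt ρ₀ := hθt_lo ρ₀ hρ₀0 (by linarith)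
      have hθ₀1 : (1:ℝ) ≤ θt ρ₀ := le_trans hlo1 hθ₀lo
      have hε2 : 0 < ε/2 := by linarith
      have hUp : ∀ᶠ ρ in 𝓝 ρ₀, θt ρ ≤ θt ρ₀ + ε/2 := by
        have hstrict : φf ρ₀ (θt ρ₀ + ε/2) - (θt ρ₀ + ε/2) ^ e < 0 := by
          have h1 : φf ρ₀ (θt ρ₀ + ε/2) ≤ φf ρ₀ (θt ρ₀) :=
            hφanti ρ₀ _ _ hρ₀0 (by linarith) hθ₀1 (by linarith)
          have h2 : φf ρ₀ (θt ρ₀) ≤ (θt ρ₀) ^ e := (hmemS ρ₀ hρ₀0 (by linarith)).2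
          have h3 : (θt ρ₀) ^ e < (θt ρ₀ + ε/2) ^ e :=
            Real.rpow_lt_rpow (by linarith) (by linarith) he
          linarith
        have hcont : ContinuousAt (fun ρ => φf ρ (θt ρ₀ + ε/2) - (θt ρ₀ + ε/2) ^ e) ρ₀ :=
          (hφcontρ _ (by linarith)).sub continuousAt_const
        have hev := hcont (Iio_mem_nhds hstrict)
        filter_upwards [hev, Ioo_mem_nhds hρ₀0 h2R0] with ρ h1 h2
        apply csInf_le (hbddb ρ)
        have h1' : φf ρ (θt ρ₀ + ε/2) - (θt ρ₀ + ε/2) ^ e < 0 := h1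
        exact ⟨by linarith, by linarith⟩
      have hLow : ∀ᶠ ρ in 𝓝 ρ₀, θt ρ₀ - ε/2 ≤ θt ρ := by
        rcases lt_or_ge (θt ρ₀ - ε/2) lo with hcase | hcase
        · filter_upwards [Ioo_mem_nhds hρ₀0 h2R0] with ρ h2
          linarith [hθt_lo ρ h2.1 h2.2.le]
        · have hnotmem : (θt ρ₀ - ε/2) ∉ SS ρ₀ := by
            intro hmem
            have h1 : θt ρ₀ ≤ θt ρ₀ - ε/2 := csInf_le (hbddb ρ₀) hmem
            linarith
          have hstrict : 0 < φf ρ₀ (θt ρ₀ - ε/2) - (θt ρ₀ - ε/2) ^ e := by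
            by_contra hcon
            push_neg at hcon
            exact hnotmem ⟨hcase, by linarith⟩
          have hcont : ContinuousAt (fun ρ => φf ρ (θt ρ₀ - ε/2) - (θt ρ₀ - ε/2) ^ e) ρ₀ :=
            (hφcontρ _ (le_trans hlo1 hcase)).sub continuousAt_const
          have hev := hcont (Ioi_mem_nhds hstrict)
          filter_upwards [hev, Ioo_mem_nhds hρ₀0 h2R0] with ρ h1 h2
          have h1' : 0 < φf ρ (θt ρ₀ - ε/2) - (θt ρ₀ - ε/2) ^ e := h1
          apply le_csInf (hSne ρ h2.1 h2.2.le)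
          intro θ hθS
          by_contra hlt
          push_neg at hlt
          have hθ1 : (1:ℝ) ≤ θ := le_trans hlo1 hθS.1
          have h3 : φf ρ (θt ρ₀ - ε/2) ≤ φf ρ θ := hφanti ρ _ _ h2.1 h2.2.le hθ1 hlt.le
          have h4 : θ ^ e ≤ (θt ρ₀ - ε/2) ^ e :=
            Real.rpow_le_rpow (by linarith) hlt.le he.le
          have h5 := hθS.2
          linarith
      obtain ⟨δ, hδ, hδp⟩ := Metric.eventually_nhds_iff.1 (hUp.and hLow)
      refine ⟨δ, hδ, fun {ρ} hρd => ?_⟩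
      obtain ⟨hu', hl'⟩ := hδp hρd
      rw [Real.dist_eq, abs_sub_lt_iff]
      constructor <;> linarith
    have heq : (fun ρ => thetaTildeP m r lo u z₀ ρ) =ᶠ[𝓝 ρ₀] θt := by
      filter_upwards [Ioo_mem_nhds hρ₀0 h2R0] with ρ hρ
      exact hTT ρ hρ.1
    rw [continuousAt_congr heq]
    exact hθtcont
  · -- (ii) sub-intrinsic property
    intro ρ s hρ hρs hsR
    have hs0 : 0 < s := lt_of_lt_of_le hρ hρs
    have hs2R : s ≤ 2 * R := by linarith
    have hΘ_ge : θt s ≤ thetaSys m r lo R u z₀ ρ := by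
      rw [hΘ_def ρ hρ]
      exact le_csSup (hbddA ρ hρ) ⟨s, ⟨hρs, hsR⟩, rfl⟩
    set Θ : ℝ := thetaSys m r lo R u z₀ ρ with hΘdef
    have hΘlo : lo ≤ Θ := le_trans (hθt_lo s hs0 hs2R) hΘ_ge
    have hΘ1 : (1:ℝ) ≤ Θ := le_trans hlo1 hΘlo
    have hΘpos : (0:ℝ) < Θ := by linarith
    have hφ : φf s Θ ≤ Θ ^ e := hF6 s Θ hs0 hs2R hΘ_ge
    have hcN : (0:ℝ) < Θ ^ (c * (N:ℝ)) := Real.rpow_pos_of_pos hΘpos _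
    have hrm : (0:ℝ) < s ^ (r/m) := Real.rpow_pos_of_pos hs0 _
    have hVVs := hVVpos s hs0
    rw [setAverage_eq, integral_div, smul_eq_mul, measureReal_def, hvolP z₀ Θ s hΘpos hs0]
    have hgoal_eq : ((Θ ^ (c * (N:ℝ)) * VV s))⁻¹ * (J s Θ / s ^ (r/m))
        = φf s Θ * (Θ ^ (c * (N:ℝ)))⁻¹ := by
      simp only [hφ_def]
      rw [mul_inv, ← div_div]
      ring
    rw [show (∫ w in cylP m z₀ Θ s, ‖u w‖ ^ r) = J s Θ from rfl, hgoal_eq]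
    calc φf s Θ * (Θ ^ (c * (N:ℝ)))⁻¹ ≤ Θ ^ e * (Θ ^ (c * (N:ℝ)))⁻¹ :=
          mul_le_mul_of_nonneg_right hφ (inv_nonneg.2 hcN.le)
      _ = Θ ^ (e + -(c * (N:ℝ))) := by
          rw [Real.rpow_add hΘpos, Real.rpow_neg hΘpos.le]
      _ = Θ ^ (2 * r * m / (1 + m)) := by
          congr 1
          rw [he_def, hc_def]
          field_simp
          ring
  · -- (iii) growth bound
    intro ρ s hρ hρs hsR
    have hs0 : 0 < s := lt_trans hρ hρs
    have hΘs_lo : lo ≤ thetaSys m r lo R u z₀ s := by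
      rw [hΘ_def s hs0]
      exact le_trans (hθt_lo s hs0 (by linarith)) (le_csSup (hbddA s hs0) ⟨s, ⟨le_refl s, hsR⟩, rfl⟩)
    have hβ : (1:ℝ) ≤ (s / ρ) ^ Ke := by
      calc (1:ℝ) = 1 ^ Ke := (Real.one_rpow _).symm
        _ ≤ (s / ρ) ^ Ke := Real.rpow_le_rpow zero_le_one
            ((one_le_div hρ).2 hρs.le) hKepos.le
    rw [hΘ_def ρ hρ]
    apply csSup_le (Set.Nonempty.image _ (Set.nonempty_Icc.2 (le_trans hρs.le hsR)))
    rintro x ⟨τ, hτ, rfl⟩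
    have hτ0 : 0 < τ := lt_of_lt_of_le hρ hτ.1
    rcases le_total τ s with hc1 | hc1
    · calc θt τ ≤ (s / τ) ^ Ke * θt s := hgrow τ s hτ0 hc1 (by linarith)
        _ ≤ (s / ρ) ^ Ke * θt s := by
            apply mul_le_mul_of_nonneg_right _ (by linarith [hθt_lo s hs0 (by linarith : s ≤ 2*R)] : (0:ℝ) ≤ θt s)
            exact Real.rpow_le_rpow (div_nonneg hs0.le hτ0.le)
              (div_le_div_of_nonneg_left hs0.le hρ hτ.1) hKepos.le
        _ ≤ (s / ρ) ^ Ke * thetaSys m r lo R u z₀ s := by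
            apply mul_le_mul_of_nonneg_left _ (Real.rpow_nonneg (div_nonneg hs0.le hρ.le) _)
            rw [hΘ_def s hs0]
            exact le_csSup (hbddA s hs0) ⟨s, ⟨le_refl s, hsR⟩, rfl⟩
    · calc θt τ ≤ thetaSys m r lo R u z₀ s := by
            rw [hΘ_def s hs0]
            exact le_csSup (hbddA s hs0) ⟨τ, ⟨hc1, hτ.2⟩, rfl⟩
        _ ≤ (s / ρ) ^ Ke * thetaSys m r lo R u z₀ s :=
            le_mul_of_one_le_left (le_trans (by linarith : (0:ℝ) ≤ lo) hΘs_lo) hβ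
  · -- (iv) uniform bound
    intro ρ hρ
    obtain ⟨hρ0, hρR⟩ := hρ
    rw [hΘ_def ρ hρ0]
    apply csSup_le (Set.Nonempty.image _ (Set.nonempty_Icc.2 hρR))
    rintro x ⟨τ, hτ, rfl⟩
    have hτ0 : 0 < τ := lt_of_lt_of_le hρ0 hτ.1
    calc θt τ ≤ (4 * R / τ) ^ Ke * lo := hup τ hτ0 hτ.2
      _ ≤ (4 * R / ρ) ^ Ke * lo := by
          apply mul_le_mul_of_nonneg_right _ hlopos.le
          exact Real.rpow_le_rpow (div_nonneg (by linarith) hτ0.le)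
            (div_le_div_of_nonneg_left (by linarith) hρ0 hτ.1) hKepos.le

end
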